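/- arXiv:1901.10734 — 2 statements merged into one kernel-verified Lean document; each statement's English description precedes it below -/
import Mathlib

section
/- Let q ≡ 1 (mod 4) be prime and e ≥ 3 odd. The eigenvalues of the adjacency matrix of G_{q^e} are exactly (q^e − q^{e−1})/2, (−q^{e−1} + q^{e−1/2})/2, 0, and (−q^{e−1} − q^{e−1/2})/2. -/
/-!
Adjacency in `G_{q^e}` only depends on residues mod `q`, so its adjacency matrix is the Paley
matrix `P` of `𝔽_q` blown up along the reduction map `ℤ/q^eℤ → 𝔽_q`, whose fibres have `q^(e-1)`
elements. For such a blow-up the nonzero eigenvalues are `q^(e-1)` times those of `P` (summing an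
eigenvector over the fibres gives an eigenvector of `P`), and `0` is an eigenvalue as soon as a
fibre has two points. Writing `2P = J - I + Q` with `Q` the Jacobsthal matrix of the quadratic
character, the Jacobi sum `∑ χ(x) χ(1 - x) = -χ(-1)` gives `Q² = qI - J`, hence
`P² + P = (q-1)/4 · (I + J)` and `PJ = (q-1)/2 · J`. So the eigenvalues of `P` are `(q-1)/2` and the
roots `(-1 ± √q)/2` of `x² + x - (q-1)/4`.
-/

/-- The character χ_{q^e} : ℤ/q^eℤ → ℤ given by the Legendre symbol mod q of (the lift of) x. -/
def chi (q e : ℕ) [Fact q.Prime] (x : ZMod (q ^ e)) : ℤ := legendreSym q (x.val : ℤ)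

/-- The graph G_{q^e}: vertex set ℤ/q^eℤ, with x ~ y iff χ_{q^e}(x−y)=1 (stated symmetrically;
under the standing hypothesis q ≡ 1 (mod 4) the two conditions are equivalent). -/
def Gqe (q e : ℕ) [Fact q.Prime] : SimpleGraph (ZMod (q ^ e)) where
  Adj x y := x ≠ y ∧ chi q e (x - y) = 1 ∧ chi q e (y - x) = 1
  symm := ⟨fun _ _ ⟨h1, h2, h3⟩ => ⟨h1.symm, h3, h2⟩⟩
  loopless := ⟨fun _ h => h.1 rfl⟩

open Classical in
/-- The adjacency matrix of G_{q^e} with real entries. -/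
noncomputable def adjMat (q e : ℕ) [Fact q.Prime] :
    Matrix (ZMod (q ^ e)) (ZMod (q ^ e)) ℝ :=
  fun x y => if (Gqe q e).Adj x y then 1 else 0

open Finset Matrix

namespace Matrix

variable {n R : Type*} [Fintype n]

def HasEigenvalue [Semiring R] (M : Matrix n n R) (μ : R) : Prop :=
  ∃ v, v ≠ 0 ∧ M *ᵥ v = μ • v

lemma ones_mulVec [Semiring R] (v : n → R) : (of 1 : Matrix n n R) *ᵥ v = (∑ i, v i) • 1 := by
  ext; simp [mulVec, dotProduct]

lemma ones_mul_ones [Semiring R] :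
    (of 1 : Matrix n n R) * of 1 = (Fintype.card n : R) • of 1 := by
  ext; simp [mul_apply]

variable [DecidableEq n] [CommRing R] {P : Matrix n n R} {c : R}

lemma mulVec_mulVec_add_mulVec (hP : P * P + P = c • (1 + of 1)) (v : n → R) :
    P *ᵥ (P *ᵥ v) + P *ᵥ v = c • v + (c * ∑ i, v i) • 1 := by
  rw [mulVec_mulVec, ← add_mulVec, hP, smul_mulVec, add_mulVec, one_mulVec, ones_mulVec,
    smul_add, smul_smul]

/-- `P *ᵥ u - s • u` is an `r`-eigenvector because `(P - r)(P - s) = c J` and `J u = 0`. -/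
lemma hasEigenvalue_of_mul_self_add_eq (hP : P * P + P = c • (1 + of 1)) {r s : R}
    (hrs : r + s = -1) (hrs' : r * s = -c) {u : n → R} (hu : ∑ i, u i = 0)
    (hw : P *ᵥ u - s • u ≠ 0) : P.HasEigenvalue r := by
  refine ⟨_, hw, ?_⟩
  have h := mulVec_mulVec_add_mulVec hP u
  rw [hu, mul_zero, zero_smul, add_zero] at h
  ext i
  have hi := congrFun h i
  simp only [Pi.add_apply, Pi.smul_apply, smul_eq_mul] at hi
  simp only [mulVec_sub, mulVec_smul, Pi.sub_apply, Pi.smul_apply, smul_eq_mul]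
  linear_combination hi - (P *ᵥ u) i * hrs + u i * hrs'

lemma HasEigenvalue.eq_or_sq_add_self_eq [IsDomain R] {k μ : R}
    (hP : P * P + P = c • (1 + of 1)) (hk : P *ᵥ 1 = k • 1) (h : P.HasEigenvalue μ) :
    μ = k ∨ μ ^ 2 + μ = c := by
  obtain ⟨v, hv0, hv⟩ := h
  obtain ⟨i, hi⟩ := Function.ne_iff.mp hv0
  have h1 := mulVec_mulVec_add_mulVec hP v
  rw [hv, mulVec_smul, hv] at h1
  have h2 := congrArg (P *ᵥ ·) h1
  simp only [mulVec_add, mulVec_smul, hv, hk] at h2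
  have h1i := congrFun h1 i
  have h2i := congrFun h2 i
  simp only [Pi.add_apply, Pi.smul_apply, smul_eq_mul, Pi.one_apply, mul_one] at h1i h2i
  have : (μ - k) * (μ ^ 2 + μ - c) * v i = 0 := by linear_combination h2i - k * h1i
  rcases mul_eq_zero.mp this with h | h
  · rcases mul_eq_zero.mp h with h | h
    · exact Or.inl (sub_eq_zero.mp h)
    · exact Or.inr (sub_eq_zero.mp h)
  · exact absurd h hi

end Matrix

section Jacobsthal
variable {F : Type*} [Field F] [Fintype F] [DecidableEq F]

lemma sum_quadraticChar_mul_sub (hF : ringChar F ≠ 2) (a b : F) :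
    ∑ c, quadraticChar F (a - c) * quadraticChar F (c - b) =
      quadraticChar F (-1) * ((if a = b then (Fintype.card F : ℤ) else 0) - 1) := by
  set χ := quadraticChar F
  rcases eq_or_ne a b with rfl | hab
  · have h (d : F) : χ (-d) * χ d = χ (-1) * (1 - if d = 0 then 1 else 0) := by
      rcases eq_or_ne d 0 with rfl | hd
      · simp [χ]
      · rw [neg_eq_neg_one_mul, map_mul, mul_assoc, ← pow_two, quadraticChar_sq_one hd, if_neg hd]
        ring
    rw [← Equiv.sum_comp (Equiv.addRight a)]
    simp only [Equiv.coe_addRight, sub_add_cancel_right, add_sub_cancel_right, h, ← mul_sum]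
    simp only [sum_sub_distrib, sum_const, card_univ, Int.nsmul_eq_mul, mul_one, sum_ite_eq',
      mem_univ, if_true]
  · have hd : a - b ≠ 0 := sub_ne_zero.mpr hab
    -- substituting `c = a - (a - b) * x` turns the sum into a Jacobi sum
    calc ∑ c, χ (a - c) * χ (c - b)
        = ∑ x, χ ((a - b) * x) * χ ((a - b) * (1 - x)) := by
          rw [← Equiv.sum_comp (Equiv.subLeft a), ← Equiv.sum_comp (Equiv.mulLeft₀ (a - b) hd)]
          refine sum_congr rfl fun x _ => ?_
          simp only [Equiv.subLeft_apply, Equiv.mulLeft₀_apply]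
          ring_nf
      _ = jacobiSum χ χ⁻¹ := by
          rw [(quadraticChar_isQuadratic F).inv, jacobiSum]
          refine sum_congr rfl fun x _ => ?_
          rw [map_mul, map_mul, mul_mul_mul_comm, ← pow_two, quadraticChar_sq_one hd, one_mul]
      _ = _ := by
          rw [jacobiSum_nontrivial_inv (quadraticChar_ne_one hF), if_neg hab]
          ring

lemma sum_quadraticChar_sub_left (hF : ringChar F ≠ 2) (a : F) :
    ∑ c, quadraticChar F (a - c) = 0 :=
  (Equiv.sum_comp (Equiv.subLeft a) _).trans (quadraticChar_sum_zero hF)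

lemma sum_quadraticChar_sub_right (hF : ringChar F ≠ 2) (b : F) :
    ∑ c, quadraticChar F (c - b) = 0 :=
  (Equiv.sum_comp (Equiv.subRight b) _).trans (quadraticChar_sum_zero hF)

variable (F) in
def jacobsthalMatrix : Matrix F F ℝ := of fun a b => (quadraticChar F (a - b) : ℝ)

lemma jacobsthalMatrix_mul_self (hF : ringChar F ≠ 2) :
    jacobsthalMatrix F * jacobsthalMatrix F =
      (quadraticChar F (-1) : ℝ) • ((Fintype.card F : ℝ) • 1 - of 1) := by
  ext a b
  have h := congrArg (Int.cast : ℤ → ℝ) (sum_quadraticChar_mul_sub hF a b)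
  push_cast at h
  rw [mul_apply]
  simp only [jacobsthalMatrix, of_apply, h, Matrix.smul_apply, Matrix.sub_apply, one_apply,
    Pi.one_apply, smul_eq_mul]
  split_ifs <;> ring

lemma jacobsthalMatrix_mulVec_one (hF : ringChar F ≠ 2) :
    jacobsthalMatrix F *ᵥ 1 = 0 := by
  ext a
  have h := congrArg (Int.cast : ℤ → ℝ) (sum_quadraticChar_sub_left hF a)
  push_cast at h
  simpa only [jacobsthalMatrix, mulVec, dotProduct, of_apply, Pi.one_apply, mul_one,
    Pi.zero_apply] using h

lemma jacobsthalMatrix_mul_ones (hF : ringChar F ≠ 2) :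
    jacobsthalMatrix F * of 1 = 0 := by
  ext a b
  simpa only [mul_apply, of_apply, Pi.one_apply, mulVec, dotProduct, Matrix.zero_apply,
    Pi.zero_apply] using
    congrFun (jacobsthalMatrix_mulVec_one hF) a

lemma ones_mul_jacobsthalMatrix (hF : ringChar F ≠ 2) :
    of 1 * jacobsthalMatrix F = 0 := by
  ext a b
  have h := congrArg (Int.cast : ℤ → ℝ) (sum_quadraticChar_sub_right hF b)
  push_cast at h
  simpa only [jacobsthalMatrix, mul_apply, of_apply, Pi.one_apply, mul_one, one_mul,
    Matrix.zero_apply] using h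

end Jacobsthal

section Paley
variable {F : Type*} [Field F] [Fintype F]

lemma ringChar_ne_two_of_card_mod_four_eq_one (hF : Fintype.card F % 4 = 1) :
    ringChar F ≠ 2 := fun h2 => by
  have := FiniteField.even_card_of_char_two h2
  omega

variable [DecidableEq F]

lemma quadraticChar_neg_one_of_card_mod_four_eq_one (hF : Fintype.card F % 4 = 1) :
    quadraticChar F (-1) = 1 := by
  rw [quadraticChar_neg_one (ringChar_ne_two_of_card_mod_four_eq_one hF),
    ZMod.χ₄_nat_one_mod_four hF]

variable (F) in
def paleyMatrix : Matrix F F ℝ := of fun a b => if quadraticChar F (a - b) = 1 then 1 else 0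

lemma paleyMatrix_eq : paleyMatrix F = (1 / 2 : ℝ) • (of 1 - 1 + jacobsthalMatrix F) := by
  ext a b
  simp only [paleyMatrix, jacobsthalMatrix, Matrix.smul_apply, Matrix.add_apply, Matrix.sub_apply,
    of_apply, one_apply, Pi.one_apply, smul_eq_mul]
  rcases eq_or_ne a b with rfl | hab
  · simp
  · rcases quadraticChar_dichotomy (sub_ne_zero.mpr hab) with h | h <;> norm_num [h, hab]

lemma paleyMatrix_mul_self_add (hF : Fintype.card F % 4 = 1) :
    paleyMatrix F * paleyMatrix F + paleyMatrix F =
      (((Fintype.card F : ℝ) - 1) / 4) • (1 + of 1) := by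
  have h2 := ringChar_ne_two_of_card_mod_four_eq_one hF
  rw [paleyMatrix_eq]
  simp only [smul_mul_smul, add_mul, mul_add, sub_mul, mul_sub, one_mul, mul_one, ones_mul_ones,
    jacobsthalMatrix_mul_self h2, jacobsthalMatrix_mul_ones h2, ones_mul_jacobsthalMatrix h2,
    quadraticChar_neg_one_of_card_mod_four_eq_one hF]
  module

lemma paleyMatrix_mulVec_one (hF : Fintype.card F % 4 = 1) :
    paleyMatrix F *ᵥ 1 = (((Fintype.card F : ℝ) - 1) / 2) • 1 := by
  have h2 := ringChar_ne_two_of_card_mod_four_eq_one hF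
  rw [paleyMatrix_eq, smul_mulVec, add_mulVec, sub_mulVec, one_mulVec, ones_mulVec,
    jacobsthalMatrix_mulVec_one h2]
  simp only [Pi.one_apply, sum_const, card_univ, nsmul_eq_mul, mul_one]
  module

lemma paleyMatrix_hasEigenvalue_of_add_eq_of_mul_eq (hF : Fintype.card F % 4 = 1) {r s : ℝ}
    (hrs : r + s = -1) (hrs' : r * s = -(((Fintype.card F : ℝ) - 1) / 4)) (hr : r ≠ 0) :
    (paleyMatrix F).HasEigenvalue r := by
  refine hasEigenvalue_of_mul_self_add_eq (paleyMatrix_mul_self_add hF) hrs hrs'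
    (u := Pi.single 0 1 - Pi.single 1 1) (by simp) fun h => hr ?_
  have h0 := congrFun h 0
  simp only [paleyMatrix, mulVec_sub, mulVec_single, Pi.sub_apply, Pi.smul_apply, col_apply,
    of_apply, sub_self, zero_sub, quadraticChar_neg_one_of_card_mod_four_eq_one hF,
    Pi.single_eq_same, Pi.single_eq_of_ne one_ne_zero.symm, Pi.zero_apply, quadraticChar_zero,
    zero_ne_one, if_false, if_true, op_smul_eq_mul, mul_one, smul_eq_mul, sub_zero] at h0
  linear_combination hrs + h0

theorem paleyMatrix_hasEigenvalue_iff (hF : Fintype.card F % 4 = 1) (μ : ℝ) :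
    (paleyMatrix F).HasEigenvalue μ ↔ μ ∈ ({((Fintype.card F : ℝ) - 1) / 2,
      (-1 + √(Fintype.card F)) / 2, (-1 - √(Fintype.card F)) / 2} : Set ℝ) := by
  set q := (Fintype.card F : ℝ)
  have hq : √q ^ 2 = q := Real.sq_sqrt (Nat.cast_nonneg _)
  have hq1 : 1 < √q :=
    Real.lt_sqrt_of_sq_lt (by rw [one_pow]; exact Nat.one_lt_cast.mpr Fintype.one_lt_card)
  simp only [Set.mem_insert_iff, Set.mem_singleton_iff]
  constructor
  · intro h
    rcases h.eq_or_sq_add_self_eq (paleyMatrix_mul_self_add hF) (paleyMatrix_mulVec_one hF)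
      with h | h
    · exact Or.inl h
    · have : (μ - (-1 + √q) / 2) * (μ - (-1 - √q) / 2) = 0 := by linear_combination h - hq / 4
      rcases mul_eq_zero.mp this with h | h
      · exact Or.inr (Or.inl (sub_eq_zero.mp h))
      · exact Or.inr (Or.inr (sub_eq_zero.mp h))
  · rintro (rfl | rfl | rfl)
    · exact ⟨1, one_ne_zero, paleyMatrix_mulVec_one hF⟩
    · exact paleyMatrix_hasEigenvalue_of_add_eq_of_mul_eq hF (s := (-1 - √q) / 2) (by ring)
        (by linear_combination -hq / 4) (by linarith)
    · exact paleyMatrix_hasEigenvalue_of_add_eq_of_mul_eq hF (s := (-1 + √q) / 2) (by ring)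
        (by linear_combination -hq / 4) (by linarith)

end Paley

section BlowUp
variable {V W K : Type*} [Fintype V] [DecidableEq W] [Field K]

def fiberSum (π : V → W) (v : V → K) (b : W) : K := ∑ x with π x = b, v x

lemma fiberSum_smul (π : V → W) (c : K) (v : V → K) : fiberSum π (c • v) = c • fiberSum π v := by
  ext b; simp [fiberSum, mul_sum]

lemma fiberSum_comp {π : V → W} {t : ℕ} (ht : ∀ b, #{x | π x = b} = t) (w : W → K) :
    fiberSum π (w ∘ π) = (t : K) • w := by
  ext b
  rw [fiberSum, sum_congr rfl fun x hx => by rw [Function.comp_apply, (mem_filter.mp hx).2],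
    sum_const, ht, nsmul_eq_mul, Pi.smul_apply, smul_eq_mul]

variable [Fintype W]

lemma submatrix_mulVec_self (M : Matrix W W K) (π : V → W) (v : V → K) :
    M.submatrix π π *ᵥ v = (M *ᵥ fiberSum π v) ∘ π := by
  ext x
  calc ∑ y, M (π x) (π y) * v y = ∑ b, ∑ y with π y = b, M (π x) (π y) * v y :=
        (sum_fiberwise _ _ _).symm
    _ = ∑ b, M (π x) b * fiberSum π v b := by
        simp_rw [fiberSum, mul_sum]
        exact sum_congr rfl fun b _ => sum_congr rfl fun y hy => by rw [(mem_filter.mp hy).2]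

variable [CharZero K]

theorem hasEigenvalue_submatrix_self_iff (M : Matrix W W K) {π : V → W} {t : ℕ}
    (ht : ∀ b, #{x | π x = b} = t) (hπ : ¬ π.Injective) (μ : K) :
    (M.submatrix π π).HasEigenvalue μ ↔ μ = 0 ∨ ∃ θ, M.HasEigenvalue θ ∧ μ = t * θ := by
  obtain ⟨x, y, hxy, hne⟩ := Function.not_injective_iff.mp hπ
  have ht0 : (t : K) ≠ 0 := by
    rw [Nat.cast_ne_zero, ← ht (π x), ← pos_iff_ne_zero, card_pos]
    exact ⟨x, by simp⟩
  constructor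
  · rintro ⟨v, hv0, hv⟩
    refine or_iff_not_imp_left.mpr fun hμ => ⟨μ / t, ⟨fiberSum π v, fun h0 => hv0 ?_, ?_⟩, ?_⟩
    · rw [submatrix_mulVec_self, h0, mulVec_zero] at hv
      exact (smul_eq_zero.mp hv.symm).resolve_left hμ
    · have h := congrArg (fiberSum π) hv
      rw [submatrix_mulVec_self, fiberSum_comp ht, fiberSum_smul] at h
      rw [div_eq_inv_mul, mul_smul, ← h, inv_smul_smul₀ ht0]
    · field_simp
  · rintro (rfl | ⟨θ, ⟨w, hw0, hw⟩, rfl⟩)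
    · classical
      refine ⟨Pi.single x 1 - Pi.single y 1, fun h => ?_, ?_⟩
      · simpa [hne] using congrFun h x
      · ext i
        simp [mulVec_sub, mulVec_single, hxy]
    · refine ⟨w ∘ π, fun h => hw0 ?_, ?_⟩
      · have h' := fiberSum_comp ht w
        rw [h, show fiberSum π (0 : V → K) = 0 by ext; simp [fiberSum]] at h'
        exact (smul_eq_zero.mp h'.symm).resolve_left ht0
      · rw [submatrix_mulVec_self, fiberSum_comp ht, mulVec_smul, hw, smul_smul]
        rfl

end BlowUp

lemma AddMonoidHom.card_fiber_mul_card_of_surjective {G H F : Type*} [AddGroup G] [Fintype G]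
    [AddMonoid H] [Fintype H] [DecidableEq H] [FunLike F G H] [AddMonoidHomClass F G H] {f : F}
    (hf : Function.Surjective f) (b : H) :
    #{g | f g = b} * Fintype.card H = Fintype.card G :=
  calc #{g | f g = b} * Fintype.card H = ∑ c : H, #{g | f g = c} := by
        rw [sum_congr rfl fun c _ => AddMonoidHom.card_fiber_eq_of_mem_range f (hf c) (hf b),
          sum_const, card_univ, smul_eq_mul, mul_comm]
    _ = Fintype.card G := (card_eq_sum_card_fiberwise fun _ _ => mem_univ _).symm

section Gqe
variable {q e : ℕ} [Fact q.Prime] (he : e ≠ 0)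

lemma chi_eq_quadraticChar_castHom (z : ZMod (q ^ e)) :
    chi q e z = quadraticChar (ZMod q) (ZMod.castHom (dvd_pow_self q he) (ZMod q) z) := by
  rw [chi, legendreSym, Int.cast_natCast, ZMod.castHom_apply, ZMod.cast_eq_val]

lemma card_fiber_castHom (b : ZMod q) :
    #{x : ZMod (q ^ e) | ZMod.castHom (dvd_pow_self q he) (ZMod q) x = b} = q ^ (e - 1) := by
  have h := AddMonoidHom.card_fiber_mul_card_of_surjective
    (ZMod.ringHom_surjective (ZMod.castHom (dvd_pow_self q he) (ZMod q))) b
  rw [ZMod.card, ZMod.card] at h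
  exact Nat.eq_of_mul_eq_mul_right (Fact.out : q.Prime).pos (h.trans (pow_sub_one_mul he q).symm)

lemma gqe_adj_iff (h4 : q % 4 = 1) (x y : ZMod (q ^ e)) :
    (Gqe q e).Adj x y ↔ quadraticChar (ZMod q) (ZMod.castHom (dvd_pow_self q he) (ZMod q) x -
      ZMod.castHom (dvd_pow_self q he) (ZMod q) y) = 1 := by
  have hneg := quadraticChar_neg_one_of_card_mod_four_eq_one (F := ZMod q) (by rwa [ZMod.card])
  set π := ZMod.castHom (dvd_pow_self q he) (ZMod q)
  have hsymm : quadraticChar (ZMod q) (π (y - x)) = quadraticChar (ZMod q) (π (x - y)) := by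
    rw [← neg_sub x y, map_neg, neg_eq_neg_one_mul, map_mul, hneg, one_mul]
  change x ≠ y ∧ chi q e (x - y) = 1 ∧ chi q e (y - x) = 1 ↔ _
  rw [chi_eq_quadraticChar_castHom he, chi_eq_quadraticChar_castHom he, hsymm, and_self,
    ← map_sub]
  refine ⟨And.right, fun h => ⟨fun hxy => ?_, h⟩⟩
  rw [hxy, sub_self, map_zero, quadraticChar_zero] at h
  exact zero_ne_one h

lemma adjMat_eq_submatrix (h4 : q % 4 = 1) :
    adjMat q e = (paleyMatrix (ZMod q)).submatrix (ZMod.castHom (dvd_pow_self q he) (ZMod q))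
      (ZMod.castHom (dvd_pow_self q he) (ZMod q)) := by
  ext x y
  simp only [adjMat, paleyMatrix, gqe_adj_iff he h4, submatrix_apply, of_apply]

end Gqe

theorem stmt_13_general (q e : ℕ) [Fact q.Prime] (h4 : q % 4 = 1) (he3 : 3 ≤ e)
    (μ : ℝ) :
    (∃ v : ZMod (q ^ e) → ℝ, v ≠ 0 ∧ (adjMat q e).mulVec v = μ • v) ↔
      μ ∈ ({((q : ℝ) ^ e - (q : ℝ) ^ (e - 1)) / 2,
            (-(q : ℝ) ^ (e - 1) + (q : ℝ) ^ (e - 1) * Real.sqrt q) / 2, 0,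
            (-(q : ℝ) ^ (e - 1) - (q : ℝ) ^ (e - 1) * Real.sqrt q) / 2} : Set ℝ) := by
  have he0 : e ≠ 0 := by omega
  have hq : Fintype.card (ZMod q) % 4 = 1 := by rwa [ZMod.card]
  have hπ : ¬ Function.Injective (ZMod.castHom (dvd_pow_self q he0) (ZMod q)) := fun h => by
    have hle := Fintype.card_le_of_injective _ h
    rw [ZMod.card, ZMod.card] at hle
    have hlt : q ^ 1 < q ^ e := Nat.pow_lt_pow_right (Fact.out : q.Prime).one_lt (by omega)
    rw [pow_one] at hlt
    omega
  rw [adjMat_eq_submatrix he0 h4]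
  change Matrix.HasEigenvalue _ μ ↔ _
  rw [hasEigenvalue_submatrix_self_iff _ (card_fiber_castHom he0) hπ]
  simp only [paleyMatrix_hasEigenvalue_iff hq, ZMod.card, Set.mem_insert_iff,
    Set.mem_singleton_iff, or_and_right, exists_or, exists_eq_left]
  set t := (q : ℝ) ^ (e - 1)
  have hk : t * ((q - 1) / 2) = ((q : ℝ) ^ e - t) / 2 := by rw [← pow_sub_one_mul he0]; ring
  have hr : t * ((-1 + √q) / 2) = (-t + t * √q) / 2 := by ring
  have hs : t * ((-1 - √q) / 2) = (-t - t * √q) / 2 := by ring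
  rw [Nat.cast_pow, hk, hr, hs]
  tauto

/-- For a prime q ≡ 1 (mod 4) and odd e ≥ 3, the eigenvalues of the adjacency
matrix of G_{q^e} are exactly (q^e−q^{e−1})/2, (−q^{e−1}+q^{e−1/2})/2, 0 and
(−q^{e−1}−q^{e−1/2})/2. -/
theorem stmt_13 (q e : ℕ) [Fact q.Prime] (h4 : q % 4 = 1) (he : Odd e) (he3 : 3 ≤ e)
    (μ : ℝ) :
    (∃ v : ZMod (q ^ e) → ℝ, v ≠ 0 ∧ (adjMat q e).mulVec v = μ • v) ↔
      μ ∈ ({((q : ℝ) ^ e - (q : ℝ) ^ (e - 1)) / 2,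
            (-(q : ℝ) ^ (e - 1) + (q : ℝ) ^ (e - 1) * Real.sqrt q) / 2, 0,
            (-(q : ℝ) ^ (e - 1) - (q : ℝ) ^ (e - 1) * Real.sqrt q) / 2} : Set ℝ) :=
  stmt_13_general q e h4 he3 μ
end

section
/- (Expander mixing lemma) Let G be a d-regular graph on n vertices with λ(G) the maximum of |λ_i| over nontrivial adjacency eigenvalues. Then for all vertex subsets U, W: |e(U,W) − (d/n)|U||W|| ≤ λ(G)·√(|U||W|), where e(U,W) counts edges with one endpoint in U and one in W (edges within U∩W counted twice). -/
/-!
Subtracting from the adjacency matrix `A` its component `(d / n) J` along the constant vectors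
gives a symmetric matrix `B` whose image consists of vectors with zero sum, since `A` has all
row and column sums equal to `d`. Hence an eigenvector of `B` for a nonzero eigenvalue `μ` is
orthogonal to the constants and is also an eigenvector of `A` for `μ`, so every eigenvalue of
`B` is bounded by `λ` in absolute value, and by the spectral theorem `‖B y‖ ≤ λ ‖y‖`. The mixing
lemma is then Cauchy–Schwarz applied to `1_U ⬝ᵥ B 1_W = e(U, W) - (d / n) |U| |W|`.
-/

open Module.End Matrix Finset

theorem LinearMap.IsSymmetric.norm_apply_le_of_forall_hasEigenvalue {𝕜 E : Type*} [RCLike 𝕜]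
    [NormedAddCommGroup E] [InnerProductSpace 𝕜 E] [FiniteDimensional 𝕜 E] {T : E →ₗ[𝕜] E}
    (hT : T.IsSymmetric) {c : ℝ} (hc : 0 ≤ c) (hev : ∀ μ, HasEigenvalue T μ → ‖μ‖ ≤ c)
    (v : E) : ‖T v‖ ≤ c * ‖v‖ := by
  set b := hT.eigenvectorBasis rfl
  have hcoord : ∀ i, ‖b.repr (T v) i‖ ^ 2 ≤ (c * ‖b.repr v i‖) ^ 2 := fun i => by
    rw [hT.eigenvectorBasis_apply_self_apply, norm_mul]
    gcongr
    exact hev _ (hT.hasEigenvalue_eigenvalues rfl i)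
  refine le_of_sq_le_sq ?_ (by positivity)
  rw [← b.repr.norm_map, ← b.repr.norm_map v, mul_pow, EuclideanSpace.norm_sq_eq,
    EuclideanSpace.norm_sq_eq, mul_sum]
  simpa only [mul_pow] using sum_le_sum fun i _ => hcoord i

theorem Matrix.IsHermitian.abs_dotProduct_mulVec_le {n : Type*} [Fintype n] [DecidableEq n]
    {M : Matrix n n ℝ} (hM : M.IsHermitian) {c : ℝ} (hc : 0 ≤ c)
    (hev : ∀ (μ : ℝ) (v : n → ℝ), v ≠ 0 → M *ᵥ v = μ • v → |μ| ≤ c) (x y : n → ℝ) :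
    |x ⬝ᵥ M *ᵥ y| ≤ c * (‖WithLp.toLp 2 x‖ * ‖WithLp.toLp 2 y‖) := by
  have hT := isSymmetric_toEuclideanLin_iff.mpr hM
  have hnorm := hT.norm_apply_le_of_forall_hasEigenvalue hc (fun μ hμ => by
    obtain ⟨v, hv⟩ := hμ.exists_hasEigenvector
    refine hev μ (WithLp.ofLp v) (by simpa using hv.2) ?_
    simpa using congrArg WithLp.ofLp (mem_eigenspace_iff.mp hv.1)) (WithLp.toLp 2 y)
  calc |x ⬝ᵥ M *ᵥ y| = |inner ℝ (WithLp.toLp 2 x) (toEuclideanLin M (WithLp.toLp 2 y))| := by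
        rw [toLpLin_toLp, EuclideanSpace.inner_toLp_toLp, dotProduct_comm]; rfl
    _ ≤ ‖WithLp.toLp 2 x‖ * ‖toEuclideanLin M (WithLp.toLp 2 y)‖ := abs_real_inner_le_norm _ _
    _ ≤ c * (‖WithLp.toLp 2 x‖ * ‖WithLp.toLp 2 y‖) := by
        rw [mul_left_comm]
        gcongr

theorem Matrix.indicator_dotProduct_mulVec_indicator {n R : Type*} [Fintype n] [DecidableEq n]
    [NonAssocSemiring R] (M : Matrix n n R) (U W : Finset n) :
    (fun t => if t ∈ U then (1 : R) else 0) ⬝ᵥ M *ᵥ (fun t => if t ∈ W then 1 else 0)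
      = ∑ u ∈ U, ∑ w ∈ W, M u w := by
  simp [dotProduct, mulVec, ite_mul, mul_ite, sum_ite_mem]

theorem EuclideanSpace.norm_toLp_indicator {n : Type*} [Fintype n] [DecidableEq n]
    (U : Finset n) : ‖WithLp.toLp 2 (fun t => if t ∈ U then (1 : ℝ) else 0)‖ = √(U.card : ℝ) := by
  simp [EuclideanSpace.norm_eq, apply_ite]

namespace SimpleGraph

variable {V : Type*} [Fintype V] (G : SimpleGraph V) [DecidableRel G.Adj] (d : ℕ)

noncomputable def centeredAdjMatrix : Matrix V V ℝ :=
  G.adjMatrix ℝ - ((d : ℝ) / Fintype.card V) • of fun _ _ => 1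

theorem isHermitian_centeredAdjMatrix : (G.centeredAdjMatrix d).IsHermitian :=
  (G.isHermitian_adjMatrix ℝ).sub ((isHermitian_iff_isSymm.mpr (by ext; rfl)).smul
    (IsSelfAdjoint.all _))

theorem centeredAdjMatrix_mulVec (v : V → ℝ) :
    G.centeredAdjMatrix d *ᵥ v
      = G.adjMatrix ℝ *ᵥ v - fun _ => d / Fintype.card V * ∑ t, v t := by
  rw [centeredAdjMatrix, sub_mulVec, smul_mulVec]
  congr 1
  ext t
  simp [mulVec, dotProduct]

theorem sum_centeredAdjMatrix_apply [DecidableEq V] (U W : Finset V) :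
    ∑ u ∈ U, ∑ w ∈ W, G.centeredAdjMatrix d u w
      = (∑ u ∈ U, ∑ w ∈ W, if G.Adj u w then (1 : ℝ) else 0)
        - (d : ℝ) / Fintype.card V * U.card * W.card := by
  simp only [centeredAdjMatrix, Matrix.sub_apply, Matrix.smul_apply, of_apply, adjMatrix_apply,
    sum_sub_distrib, sum_const, smul_eq_mul, nsmul_eq_mul, mul_one]
  ring

variable {G d}

theorem sum_adjMatrix_mulVec {R : Type*} [CommSemiring R] (hd : G.IsRegularOfDegree d)
    (v : V → R) : ∑ t, (G.adjMatrix R *ᵥ v) t = d * ∑ t, v t := by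
  simp only [mulVec, dotProduct, adjMatrix_apply, ite_mul, one_mul, zero_mul]
  rw [sum_comm]
  simp [G.adj_comm, ← sum_filter, ← neighborFinset_eq_filter, hd _, mul_sum]

theorem sum_centeredAdjMatrix_mulVec (hd : G.IsRegularOfDegree d) (v : V → ℝ) :
    ∑ t, (G.centeredAdjMatrix d *ᵥ v) t = 0 := by
  rcases isEmpty_or_nonempty V with hV | hV
  · simp
  rw [centeredAdjMatrix_mulVec]
  simp only [Pi.sub_apply, sum_sub_distrib, sum_adjMatrix_mulVec hd, sum_const, card_univ,
    nsmul_eq_mul]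
  field_simp
  ring

theorem centeredAdjMatrix_mulVec_of_sum_eq_zero {v : V → ℝ} (hv : ∑ t, v t = 0) :
    G.centeredAdjMatrix d *ᵥ v = G.adjMatrix ℝ *ᵥ v := by
  rw [centeredAdjMatrix_mulVec, hv, mul_zero]
  exact sub_zero _

theorem abs_le_of_centeredAdjMatrix_mulVec_eq_smul (hd : G.IsRegularOfDegree d) {lam : ℝ}
    (hlam0 : 0 ≤ lam)
    (hlam : ∀ (μ : ℝ) (v : V → ℝ), v ≠ 0 → ∑ t, v t = 0 → G.adjMatrix ℝ *ᵥ v = μ • v → |μ| ≤ lam)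
    {μ : ℝ} {v : V → ℝ} (hv : v ≠ 0) (hμ : G.centeredAdjMatrix d *ᵥ v = μ • v) : |μ| ≤ lam := by
  rcases eq_or_ne μ 0 with rfl | hμ0
  · simpa using hlam0
  have hsum : ∑ t, v t = 0 := by
    have := sum_centeredAdjMatrix_mulVec hd v
    rw [hμ] at this
    simpa [← mul_sum, hμ0] using this
  exact hlam μ v hv hsum ((centeredAdjMatrix_mulVec_of_sum_eq_zero hsum).symm.trans hμ)

end SimpleGraph

open SimpleGraph in
/-- Expander mixing lemma: Let G be a d-regular graph on n vertices and let
lam bound |μ| for every nontrivial adjacency eigenvalue μ (those possessing an eigenvector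
orthogonal to the constants). Then for all vertex subsets U, W:
|e(U,W) − (d/n)|U||W|| ≤ lam·√(|U||W|), where e(U,W) counts pairs (u,w) ∈ U×W with u ~ w. -/
theorem stmt_16 {V : Type*} [Fintype V] [DecidableEq V] (G : SimpleGraph V)
    [DecidableRel G.Adj] (d : ℕ) (hd : G.IsRegularOfDegree d) (lam : ℝ) (hlam0 : 0 ≤ lam)
    (hlam : ∀ (μ : ℝ) (v : V → ℝ), v ≠ 0 → (∑ x, v x) = 0 →
      (adjMatrix ℝ G).mulVec v = μ • v → |μ| ≤ lam)
    (U W : Finset V) :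
    |(∑ u ∈ U, ∑ w ∈ W, if G.Adj u w then (1 : ℝ) else 0)
        - (d : ℝ) / (Fintype.card V) * U.card * W.card|
      ≤ lam * Real.sqrt ((U.card : ℝ) * W.card) := by
  rw [← G.sum_centeredAdjMatrix_apply, ← indicator_dotProduct_mulVec_indicator,
    Real.sqrt_mul (Nat.cast_nonneg _), ← EuclideanSpace.norm_toLp_indicator,
    ← EuclideanSpace.norm_toLp_indicator]
  exact (G.isHermitian_centeredAdjMatrix d).abs_dotProduct_mulVec_le hlam0
    (fun _ _ hv hμ => abs_le_of_centeredAdjMatrix_mulVec_eq_smul hd hlam0 hlam hv hμ) _ _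
end
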